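/- There exists a bijection g : F₂ → F₂ which is an automorphism of the Cayley graph of F₂ with respect to {a, b} (that is, for all x, y ∈ F₂, x⁻¹y ∈ S if and only if g(x)⁻¹g(y) ∈ S, where S = {a, a⁻¹, b, b⁻¹}) such that, writing Λ ≤ Perm(F₂) for the image of the left regular representation of F₂, one has Λ ∩ g⁻¹Λg = {id}. In particular, for all nontrivial x₁, x₂ ∈ F₂ it is not the case that g(x₁·y) = x₂·g(y) for all y ∈ F₂. -/

import Mathlib

/-!
`gamma` fixes the branch of the Cayley tree of words beginning with `a` or `a⁻¹` and applies the
automorphism `iota` to the rest. Two adjacent vertices lie in the same branch unless one of them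
is `1`, which both `gamma` and `iota` fix, so `gamma` maps edges to edges, and it is an
involution. If `gamma (x₁ * y) = x₂ * gamma y` for all `y`, then `y = 1` gives
`x₂ = gamma x₁ ∈ {x₁, iota x₁}`; testing `y = x₁⁻¹ * b` in the first case and `y = x₁⁻¹ * a` in
the second forces `iota x₁ = x₁`, hence `x₁ = 1`.
-/

/-- `F2` is the free group on two generators. -/
abbrev F2 := FreeGroup (Fin 2)

/-- The first generator `a`. -/
def a : F2 := FreeGroup.of 0

/-- The second generator `b`. -/
def b : F2 := FreeGroup.of 1

/-- The automorphism `ι` of `F2` determined by `ι a = a⁻¹` and `ι b = b⁻¹`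
(given here as the induced group homomorphism, which is in fact an automorphism). -/
def iota : F2 →* F2 := FreeGroup.lift fun i => (FreeGroup.of i)⁻¹

/-- `beginsWith ℓ x` means that the reduced word of `x` is nonempty and its first letter
is the generator `ℓ` or its inverse. -/
def beginsWith (ℓ : Fin 2) (x : F2) : Prop :=
  (FreeGroup.toWord x).head?.map Prod.fst = some ℓ

instance (ℓ : Fin 2) (x : F2) : Decidable (beginsWith ℓ x) := by
  unfold beginsWith; infer_instance

/-- The map `γ : F2 → F2`: `γ x = x` if the reduced word of `x` begins with `a` or `a⁻¹`,
and `γ x = ι x` otherwise (in particular `γ 1 = 1`). -/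
def gamma (x : F2) : F2 := if beginsWith 0 x then x else iota x

open FreeGroup

theorem List.IsPrefix.head?_eq {α : Type*} {l₁ l₂ : List α} (h : l₁ <+: l₂) (hne : l₁ ≠ []) :
    l₁.head? = l₂.head? := by
  obtain ⟨t, rfl⟩ := h
  cases l₁ with
  | nil => contradiction
  | cons => rfl

namespace FreeGroup

variable {α : Type*}

theorem lift_inv_of_mk (L : List (α × Bool)) :
    lift (fun i => (of i)⁻¹ : α → FreeGroup α) (mk L) = mk (L.map fun p => (p.1, !p.2)) := by
  induction L with
  | nil => exact _root_.map_one _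
  | cons p L ih =>
    obtain ⟨i, s⟩ := p
    rw [← List.singleton_append, ← mul_mk, _root_.map_mul, ih, List.map_append, ← mul_mk]
    congr 1
    cases s <;>
      simp only [lift_mk, List.map_cons, List.map_nil, List.prod_cons, List.prod_nil, mul_one,
        cond_true, cond_false, Bool.not_true, Bool.not_false, inv_inv] <;> rfl

variable [DecidableEq α]

theorem toWord_prefix_or_prefix_mul_mk_singleton (x : FreeGroup α) (q : α × Bool) :
    x.toWord <+: (x * mk [q]).toWord ∨ (x * mk [q]).toWord <+: x.toWord := by
  rw [toWord_mul, toWord_mk, reduce_singleton]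
  by_cases hred : IsReduced (x.toWord ++ [q])
  · left
    rw [hred.reduce_eq]
    exact List.prefix_append _ _
  right
  obtain hnil | ⟨w, ⟨j, t⟩, hw⟩ := x.toWord.eq_nil_or_concat'
  · simp [hnil, IsReduced.singleton] at hred
  obtain ⟨i, s⟩ := q
  have hx : IsReduced (w ++ [(j, t)]) := hw ▸ isReduced_toWord
  obtain ⟨rfl, rfl⟩ : j = i ∧ t = !s := by
    rw [hw, IsReduced, List.isChain_append] at hred
    simp only [List.IsChain.singleton, List.getLast?_append, List.getLast?_singleton,
      Option.some_or, Option.mem_def, Option.some.injEq, List.head?_cons, forall_eq', true_and,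
      not_and, Classical.not_imp] at hred
    simpa [Bool.eq_not] using hred hx
  have hstep : Red.Step (w ++ [(j, !s), (j, s)]) w := by
    simpa using Red.Step.not (L₁ := w) (L₂ := []) (x := j) (b := !s)
  rw [hw, List.append_assoc, List.singleton_append, reduce.Step.eq hstep,
    (hx.infix (List.prefix_append _ _).isInfix).reduce_eq]
  exact List.prefix_append _ _

theorem head?_toWord_mul_mk_singleton {x : FreeGroup α} {q : α × Bool} (hx : x ≠ 1)
    (hxq : x * mk [q] ≠ 1) : (x * mk [q]).toWord.head? = x.toWord.head? := by
  rcases toWord_prefix_or_prefix_mul_mk_singleton x q with h | h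
  · exact (h.head?_eq (mt toWord_eq_nil_iff.mp hx)).symm
  · exact h.head?_eq (mt toWord_eq_nil_iff.mp hxq)

theorem toWord_lift_inv_of (x : FreeGroup α) :
    (lift (fun i => (of i)⁻¹ : α → FreeGroup α) x).toWord = x.toWord.map fun p => (p.1, !p.2) := by
  conv_lhs => rw [← mk_toWord (x := x)]
  rw [lift_inv_of_mk, toWord_mk, IsReduced.reduce_eq]
  exact List.isChain_map_of_isChain _ (fun p q h e => by simp [h e]) isReduced_toWord

end FreeGroup

theorem range_toPermHom_inf_map_conj_eq_bot {G : Type*} [Group G] (g : Equiv.Perm G)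
    (h : ∀ x₁ x₂ : G, (∀ y, g (x₁ * y) = x₂ * g y) → x₁ = 1) :
    (MulAction.toPermHom G G).range ⊓
      Subgroup.map (MulAut.conj g⁻¹).toMonoidHom (MulAction.toPermHom G G).range = ⊥ := by
  rw [eq_bot_iff]
  rintro _ ⟨⟨x₁, rfl⟩, _, ⟨x₂, rfl⟩, hconj⟩
  have hx₁ : x₁ = 1 := h x₁ x₂ fun y => by
    have := congrArg (fun p : Equiv.Perm G => g (p y)) hconj
    simpa [MulAut.conj_apply] using this.symm
  rw [Subgroup.mem_bot, hx₁, _root_.map_one]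

local notation "S" => ({a, a⁻¹, b, b⁻¹} : Set F2)

theorem toWord_iota (x : F2) : (iota x).toWord = x.toWord.map fun p => (p.1, !p.2) :=
  toWord_lift_inv_of x

theorem iota_iota (x : F2) : iota (iota x) = x := by
  have : iota.comp iota = MonoidHom.id F2 := FreeGroup.ext_hom _ _ fun i => by simp [iota]
  exact DFunLike.congr_fun this x

theorem beginsWith_iota (ℓ : Fin 2) (x : F2) : beginsWith ℓ (iota x) ↔ beginsWith ℓ x := by
  unfold beginsWith
  rw [toWord_iota]
  cases x.toWord <;> rfl

theorem eq_one_of_iota_eq_self {x : F2} (h : iota x = x) : x = 1 := by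
  rw [← toWord_eq_nil_iff]
  have hw := congrArg toWord h
  rw [toWord_iota] at hw
  cases hx : x.toWord with
  | nil => rfl
  | cons p L => simp [hx, Prod.ext_iff] at hw

theorem iota_a : iota a = a⁻¹ :=
  lift_apply_of

theorem iota_b : iota b = b⁻¹ :=
  lift_apply_of

theorem iota_mem_gens {s : F2} (hs : s ∈ S) : iota s ∈ S := by
  rcases hs with rfl | rfl | rfl | rfl <;> simp [iota_a, iota_b]

theorem exists_mk_singleton_of_mem_gens {s : F2} (hs : s ∈ S) : ∃ q, s = mk [q] := by
  rcases hs with rfl | rfl | rfl | rfl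
  exacts [⟨(0, true), rfl⟩, ⟨(0, false), rfl⟩, ⟨(1, true), rfl⟩, ⟨(1, false), rfl⟩]

theorem beginsWith_iff_of_mem_gens (ℓ : Fin 2) {x y : F2} (hx : x ≠ 1) (hy : y ≠ 1)
    (hxy : x⁻¹ * y ∈ S) : beginsWith ℓ x ↔ beginsWith ℓ y := by
  obtain ⟨q, hq⟩ := exists_mk_singleton_of_mem_gens hxy
  obtain rfl : y = x * mk [q] := by rw [← hq, mul_inv_cancel_left]
  unfold beginsWith
  rw [head?_toWord_mul_mk_singleton hx hy]

theorem beginsWith_one (ℓ : Fin 2) : ¬ beginsWith ℓ 1 := by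
  simp [beginsWith]

theorem gamma_one : gamma 1 = 1 := by
  simp [gamma, beginsWith_one]

theorem gamma_involutive : Function.Involutive gamma := fun x => by
  by_cases h : beginsWith 0 x <;> simp [gamma, h, beginsWith_iota, iota_iota]

theorem gamma_eq_self_or_iota (x : F2) : gamma x = x ∨ gamma x = iota x := by
  unfold gamma
  split_ifs <;> simp

theorem gamma_a : gamma a = a :=
  if_pos (by decide)

theorem gamma_b : gamma b = b⁻¹ := by
  rw [gamma, if_neg (by decide), iota_b]

theorem gamma_eq_on_edge {x y : F2} (h : x⁻¹ * y ∈ S) :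
    (gamma x = x ∧ gamma y = y) ∨ (gamma x = iota x ∧ gamma y = iota y) := by
  by_cases hx : x = 1
  · subst hx
    rcases gamma_eq_self_or_iota y with hy | hy <;> simp [gamma_one, hy]
  by_cases hy : y = 1
  · subst hy
    rcases gamma_eq_self_or_iota x with hx | hx <;> simp [gamma_one, hx]
  have hbranch := beginsWith_iff_of_mem_gens 0 hx hy h
  by_cases h0 : beginsWith 0 x
  · left
    simp [gamma, h0, hbranch.mp h0]
  · right
    simp [gamma, h0, mt hbranch.mpr h0]

theorem gamma_mem_gens {x y : F2} (h : x⁻¹ * y ∈ S) : (gamma x)⁻¹ * gamma y ∈ S := by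
  rcases gamma_eq_on_edge h with ⟨hx, hy⟩ | ⟨hx, hy⟩
  · rwa [hx, hy]
  · rw [hx, hy, ← _root_.map_inv, ← _root_.map_mul]
    exact iota_mem_gens h

theorem eq_one_of_gamma_mul_eq {x₁ x₂ : F2} (H : ∀ y, gamma (x₁ * y) = x₂ * gamma y) : x₁ = 1 := by
  have hx₂ : x₂ = gamma x₁ := by simpa [gamma_one] using (H 1).symm
  have ha := H (x₁⁻¹ * a)
  have hb := H (x₁⁻¹ * b)
  rw [mul_inv_cancel_left, gamma_a] at ha
  rw [mul_inv_cancel_left, gamma_b] at hb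
  rcases gamma_eq_self_or_iota x₁ with h₁ | h₁ <;> rw [h₁] at hx₂ <;> rw [hx₂] at ha hb
  · rcases gamma_eq_self_or_iota (x₁⁻¹ * b) with hc | hc
    · rw [hc, mul_inv_cancel_left] at hb
      exact absurd hb (by decide)
    · rw [hc, _root_.map_mul, _root_.map_inv, iota_b, ← mul_assoc, right_eq_mul] at hb
      exact eq_one_of_iota_eq_self (mul_inv_eq_one.mp hb).symm
  · rcases gamma_eq_self_or_iota (x₁⁻¹ * a) with hc | hc
    · rw [hc, ← mul_assoc, right_eq_mul] at ha
      exact eq_one_of_iota_eq_self (mul_inv_eq_one.mp ha)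
    · rw [hc, _root_.map_mul, _root_.map_inv, iota_a, mul_inv_cancel_left] at ha
      exact absurd ha (by decide)

/-- There is an automorphism `g` of the Cayley graph of `F₂` with respect to `{a, b}` such
that, writing `Λ ≤ Perm F₂` for the image of the left regular representation, one has
`Λ ∩ g⁻¹ Λ g = {id}`; in particular for nontrivial `x₁, x₂` it is not the case that
`g (x₁ * y) = x₂ * g y` for all `y`. -/
theorem exists_cayley_automorphism_conj_trivial :
    ∃ g : Equiv.Perm F2,
      (∀ x y : F2, x⁻¹ * y ∈ ({a, a⁻¹, b, b⁻¹} : Set F2) ↔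
        (g x)⁻¹ * g y ∈ ({a, a⁻¹, b, b⁻¹} : Set F2)) ∧
      (MulAction.toPermHom F2 F2).range ⊓
        Subgroup.map (MulAut.conj g⁻¹).toMonoidHom (MulAction.toPermHom F2 F2).range = ⊥ ∧
      (∀ x₁ x₂ : F2, x₁ ≠ 1 → x₂ ≠ 1 → ¬ (∀ y : F2, g (x₁ * y) = x₂ * g y)) := by
  refine ⟨gamma_involutive.toPerm, fun x y => ⟨gamma_mem_gens, fun h => ?_⟩,
    range_toPermHom_inf_map_conj_eq_bot _ fun _ _ => eq_one_of_gamma_mul_eq,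
    fun x₁ _ hx₁ _ H => hx₁ (eq_one_of_gamma_mul_eq H)⟩
  simpa only [Function.Involutive.coe_toPerm, gamma_involutive _] using gamma_mem_gens h
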